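/- Over any universe U, the LRU (least-recently used) paging algorithm is stable: for every sequence τ, every X ⊆ U, every z ∈ X, and all cache sizes a > b, if Out(LRU_b, τ[X], z) ∩ LRU_a(τz) ≠ ∅ then LRU_b(τ[X]z) ⊆ LRU_a(τz). -/

import Mathlib

open scoped Classical

namespace SetAssoc

variable {U : Type*} [DecidableEq U]

/-- `τ[X]`: the subsequence of `τ` consisting of the requests to items of `X`. -/
noncomputable def restrict (τ : List U) (X : Set U) : List U :=
  τ.filter (fun a => decide (a ∈ X))

/-- The set of items evicted by `A_k` in response to a request `z` after serving `τ`. -/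
def Out (A : ℕ → List U → Finset U) (k : ℕ) (τ : List U) (z : U) : Finset U :=
  A k τ \ A k (τ ++ [z])

/-- The LRU cache of size `k` after serving `σ`: the set of the at most `k` most
recently requested distinct items of `σ`. -/
def LRU (k : ℕ) (σ : List U) : Finset U :=
  (σ.reverse.dedup.take k).toFinset

/-! The list `σ.reverse.dedup` orders the items of `σ` from the most to the least recently
requested, and `LRU_k(σ)` is its length-`k` prefix. Since `z ∈ X`, `τz[X] = τ[X]z`, and the
recency list of `σ[X]` is that of `σ` filtered by `X`. Prefixes of one list are nested, so
the prefix `LRU_b(τ[X]z)` of the filtered list, which misses the evicted item `w`, lies inside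
the prefix `LRU_a(τz) ∩ X`, which contains `w`. -/

lemma _root_.List.filter_dedup (p : U → Bool) (l : List U) :
    (l.filter p).dedup = l.dedup.filter p := by
  induction l with
  | nil => rfl
  | cons a l ih =>
    by_cases ha : a ∈ l <;> by_cases hp : p a <;>
      simp [List.dedup_cons_of_mem, List.dedup_cons_of_notMem, ha, hp, ih]

omit [DecidableEq U] in
lemma _root_.List.take_filter_subset_take {p : U → Bool} {l : List U} {a b : ℕ} {w : U}
    (hpw : p w) (ha : w ∈ l.take a) (hb : w ∉ (l.filter p).take b) :
    (l.filter p).take b ⊆ l.take a := by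
  have hpre : (l.take a).filter p <+: l.filter p := (List.take_prefix a l).filter p
  rcases List.prefix_or_prefix_of_prefix (List.take_prefix b _) hpre with h | h
  · exact fun x hx => (List.mem_filter.mp (h.subset hx)).1
  · exact absurd (h.subset (List.mem_filter.mpr ⟨ha, hpw⟩)) hb

lemma mem_LRU {k : ℕ} {σ : List U} {x : U} : x ∈ LRU k σ ↔ x ∈ σ.reverse.dedup.take k := by
  rw [LRU, List.mem_toFinset]

lemma mem_of_mem_LRU {k : ℕ} {σ : List U} {x : U} (h : x ∈ LRU k σ) : x ∈ σ := by
  simpa using List.take_subset _ _ (mem_LRU.mp h)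

lemma reverse_dedup_restrict (σ : List U) (X : Set U) :
    (restrict σ X).reverse.dedup = σ.reverse.dedup.filter (fun a => decide (a ∈ X)) := by
  rw [restrict, ← List.filter_reverse, List.filter_dedup]

omit [DecidableEq U] in
lemma mem_restrict {σ : List U} {X : Set U} {x : U} : x ∈ restrict σ X ↔ x ∈ σ ∧ x ∈ X := by
  simp [restrict]

omit [DecidableEq U] in
lemma restrict_append_of_mem {τ : List U} {X : Set U} {z : U} (hz : z ∈ X) :
    restrict (τ ++ [z]) X = restrict τ X ++ [z] := by
  simp [restrict, hz]

lemma LRU_restrict_subset_of_mem {σ : List U} {X : Set U} {a b : ℕ} {w : U}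
    (hwX : w ∈ X) (hb : w ∉ LRU b (restrict σ X)) (ha : w ∈ LRU a σ) :
    LRU b (restrict σ X) ⊆ LRU a σ := by
  intro x hx
  rw [mem_LRU, reverse_dedup_restrict] at hb hx
  exact mem_LRU.mpr <| List.take_filter_subset_take (p := fun a => decide (a ∈ X))
    (decide_eq_true hwX) (mem_LRU.mp ha) hb hx

/-- **LRU is stable.** -/
theorem lru_isStable :
    ∀ (τ : List U) (X : Set U) (z : U), z ∈ X →
      ∀ a b : ℕ, b < a →
        (Out (LRU (U := U)) b (restrict τ X) z ∩ LRU a (τ ++ [z])).Nonempty →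
        LRU b (restrict τ X ++ [z]) ⊆ LRU a (τ ++ [z]) := by
  intro τ X z hzX a b _ ⟨w, hw⟩
  obtain ⟨hwOut, hwa⟩ := Finset.mem_inter.mp hw
  obtain ⟨hwτX, hwb⟩ := Finset.mem_sdiff.mp hwOut
  have hwX : w ∈ X := (mem_restrict.mp (mem_of_mem_LRU hwτX)).2
  rw [← restrict_append_of_mem hzX] at hwb ⊢
  exact LRU_restrict_subset_of_mem hwX hwb hwa

end SetAssoc
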